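/- If no mult instruction is present in the first round of a core-language algorithm, then for every phase predicate ψ there is a phase transition spread →ψ spread; consequently the algorithm may never terminate. -/

import Mathlib

/-!
In a spread configuration every process may hear every value, and since both `a` and `b` occur
no `uni` instruction of the first round applies; without `mult` instructions every process
therefore ends round 1 with `?`. From then on only `?` is ever sent, so every later round again
yields `?`. The phase changes neither the inputs nor the decisions, and repeating it forever gives
an execution in which nobody decides.
-/

open Classical

namespace HO

/-! ### Values

`none` is the undefined value `?`; defined values are natural numbers, where
`some 0` plays the role of `a` and `some 1` the role of `b` (so `a < b`). -/

abbrev Val := Option ℕ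

def aVal : ℕ := 0
def bVal : ℕ := 1

/-! ### Operations -/

inductive Op where
  | min : Op
  | smor : Op

/-- Minimum of a multiset of defined values (`none` if the multiset is empty). -/
noncomputable def msMin (S : Multiset ℕ) : Option ℕ :=
  if h : S.toFinset.Nonempty then some (S.toFinset.min' h) else none

/-- Smallest most frequent value of a multiset (`none` if the multiset is empty). -/
noncomputable def msSmor (S : Multiset ℕ) : Option ℕ :=
  if h : (S.toFinset.filter fun v => ∀ w ∈ S.toFinset, S.count w ≤ S.count v).Nonempty
  then some ((S.toFinset.filter fun v => ∀ w ∈ S.toFinset, S.count w ≤ S.count v).min' h)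
  else none

noncomputable def Op.apply : Op → Multiset ℕ → Option ℕ
  | Op.min, S => msMin S
  | Op.smor, S => msSmor S

/-! ### Rounds

A round consists of at most one `uni` instruction followed by a list of `mult`
instructions with non-increasing thresholds, all thresholds lying in `[0,1)`. -/

structure Round where
  uniThr : Option ℝ
  mults : List (ℝ × Op)
  wfU : ∀ t ∈ uniThr, 0 ≤ t ∧ t < 1
  wfM : ∀ q ∈ mults, 0 ≤ q.1 ∧ q.1 < 1
  sorted : (mults.map Prod.fst).Chain' (· ≥ ·)

def Round.hasUni (R : Round) : Prop := R.uniThr.isSome = true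
def Round.hasMult (R : Round) : Prop := R.mults ≠ []

/-- `thr_u^i`: the threshold of the uni instruction, `-1` if absent. -/
noncomputable def Round.thrU (R : Round) : ℝ := R.uniThr.getD (-1)

noncomputable def minThr : List ℝ → ℝ
  | [] => -1
  | [t] => t
  | t :: ts => min t (minThr ts)

/-- `thr_m^{i,k}`: the smallest threshold of a mult instruction, `-1` if absent. -/
noncomputable def Round.thrM (R : Round) : ℝ := minThr (R.mults.map Prod.fst)

/-- Result of the first applicable `mult` instruction. -/
noncomputable def firstMult (n : ℕ) (S : Multiset ℕ) : List (ℝ × Op) → Option ℕ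
  | [] => none
  | (t, op) :: rest =>
      if 1 < S.toFinset.card ∧ t * n < (S.card : ℝ) then op.apply S
      else firstMult n S rest

/-- `update_i(H)`: the result of the first instruction of the round whose condition
is satisfied by `H − {?}`, and `?` (i.e. `none`) if no condition applies. -/
noncomputable def Round.update (R : Round) (n : ℕ) (H : Multiset Val) : Option ℕ :=
  if ∃ t ∈ R.uniThr,
      (H.filterMap id).toFinset.card = 1 ∧ t * n < ((H.filterMap id).card : ℝ)
  then msMin (H.filterMap id)
  else firstMult n (H.filterMap id) R.mults

/-! ### Communication predicates for a round -/

/-- A conjunction of atomic communication predicates for one round: possibly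
`φ_=` (field `eq`) and possibly `φ_thr` (field `thr`, with `0 ≤ thr < 1`). -/
structure RoundPred where
  eq : Bool
  thr : Option ℝ
  wf : ∀ t ∈ thr, 0 ≤ t ∧ t < 1

/-- `thr_i(ψ)`: the threshold appearing in the predicate, `-1` if absent. -/
noncomputable def RoundPred.thrVal (φ : RoundPred) : ℝ := φ.thr.getD (-1)

def RoundPred.isEqualizer (φ : RoundPred) : Prop := φ.eq = true

/-- Satisfaction of a round predicate by a tuple of heard-of multisets. -/
def RoundPred.sat {α : Type} (φ : RoundPred) (n : ℕ) (Hs : Fin n → Multiset α) : Prop :=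
  (φ.eq = true → ∀ p q, Hs p = Hs q) ∧
  ∀ t ∈ φ.thr, ∀ p, t * n < ((Hs p).card : ℝ)

/-- Logical implication between round predicates. -/
def RoundPred.implies (φ φ' : RoundPred) : Prop :=
  ∀ (α : Type) (n : ℕ) (Hs : Fin n → Multiset α), φ.sat n Hs → φ'.sat n Hs

/-! ### Tuples of values -/

/-- The multiset of values of a tuple. -/
def msetOf {n : ℕ} (f : Fin n → Val) : Multiset Val := Finset.univ.val.map f

def soloB (n : ℕ) : Fin n → Val := fun _ => some bVal
def soloA (n : ℕ) : Fin n → Val := fun _ => some aVal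
def soloQ (n : ℕ) : Fin n → Val := fun _ => none

/-- `bias(θ)`: a tuple over `{a,b}` with `θ·n` entries equal to `b`. -/
def isBias {n : ℕ} (θ : ℝ) (f : Fin n → Val) : Prop :=
  (∀ p, f p = some aVal ∨ f p = some bVal) ∧
  ((Finset.univ.filter fun p => f p = some bVal).card : ℝ) = θ * n

/-- `spread = bias(1/2)`. -/
def isSpread {n : ℕ} (f : Fin n → Val) : Prop := isBias (1/2) f

/-- `bias^?(θ)`: a tuple over `{?,b}` with `θ·n` entries equal to `b`. -/
def isBiasQ {n : ℕ} (θ : ℝ) (f : Fin n → Val) : Prop :=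
  (∀ p, f p = none ∨ f p = some bVal) ∧
  ((Finset.univ.filter fun p => f p = some bVal).card : ℝ) = θ * n

/-- `bias_a^?(θ)`: a tuple over `{?,a}` with `θ·n` entries equal to `a`. -/
def isBiasQa {n : ℕ} (θ : ℝ) (f : Fin n → Val) : Prop :=
  (∀ p, f p = none ∨ f p = some aVal) ∧
  ((Finset.univ.filter fun p => f p = some aVal).card : ℝ) = θ * n

/-! ### Round transitions -/

/-- Round transition `f →[φ]_i f'`: every process receives a sub-multiset of the
multiset of sent values, the tuple of heard-of multisets jointly satisfies `φ`,
and every process updates its variable accordingly. -/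
def roundTrans (R : Round) (φ : RoundPred) {n : ℕ} (f f' : Fin n → Val) : Prop :=
  ∃ Hs : Fin n → Multiset Val,
    (∀ p, Hs p ≤ msetOf f) ∧ φ.sat n Hs ∧ ∀ p, f' p = R.update n (Hs p)

/-- `d ∈ fire_i(f,φ)`. -/
def fire (R : Round) (φ : RoundPred) {n : ℕ} (f : Fin n → Val) (d : Val) : Prop :=
  ∃ f' : Fin n → Val, roundTrans R φ f f' ∧ ∃ p, f' p = d

/-! ### Algorithms -/

/-- An algorithm of the core language: rounds `1,…,r` (`r ≥ 2`), with a designated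
input-update round `ir` (`1 ≤ ir < r`). -/
structure Algo where
  r : ℕ
  rounds : ℕ → Round
  ir : ℕ
  two_le_r : 2 ≤ r
  one_le_ir : 1 ≤ ir
  ir_lt_r : ir < r

noncomputable def Algo.thrU (A : Algo) (i : ℕ) : ℝ := (A.rounds i).thrU
noncomputable def Algo.thrM (A : Algo) (i : ℕ) : ℝ := (A.rounds i).thrM
def Algo.hasUni (A : Algo) (i : ℕ) : Prop := (A.rounds i).hasUni
def Algo.hasMult (A : Algo) (i : ℕ) : Prop := (A.rounds i).hasMult

/-- A phase predicate: a conjunction of atomic predicates for every round. -/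
abbrev PhasePred := ℕ → RoundPred

/-- Phase transition `(f,d) →ψ (f',d')`. -/
def phaseTrans (A : Algo) (ψ : PhasePred) {n : ℕ} (f d f' d' : Fin n → Val) : Prop :=
  ∃ g : ℕ → Fin n → Val,
    g 0 = f ∧
    (∀ i, 1 ≤ i → i ≤ A.r → roundTrans (A.rounds i) (ψ i) (g (i - 1)) (g i)) ∧
    (∀ p, f' p = if g A.ir p = none then f p else g A.ir p) ∧
    (∀ p, d' p = if d p = none then g A.r p else d p)

/-- A chain of round transitions for rounds `k,…,l`. -/
def roundChain (A : Algo) (ψ : PhasePred) (k l : ℕ) {n : ℕ} (f f' : Fin n → Val) : Prop :=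
  ∃ g : ℕ → Fin n → Val,
    g (k - 1) = f ∧ g l = f' ∧
    ∀ i, k ≤ i → i ≤ l → roundTrans (A.rounds i) (ψ i) (g (i - 1)) (g i)

/-! ### Syntactic notions -/

/-- Round `i` is preserving w.r.t. `ψ`. -/
def Algo.preserving (A : Algo) (ψ : PhasePred) (i : ℕ) : Prop :=
  ¬ A.hasUni i ∨ ¬ A.hasMult i ∨ (ψ i).thrVal < max (A.thrU i) (A.thrM i)

/-- Round `i` is solo-safe w.r.t. `ψ`. -/
def Algo.soloSafe (A : Algo) (ψ : PhasePred) (i : ℕ) : Prop :=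
  0 ≤ A.thrU i ∧ A.thrU i ≤ (ψ i).thrVal

/-- The border threshold `thr̄ = max(1 − thr_u^1, 1 − thr_m^{1,k}/2)`. -/
noncomputable def Algo.borderThr (A : Algo) : ℝ :=
  max (1 - A.thrU 1) (1 - A.thrM 1 / 2)

/-- `ψ` is a decider: all rounds are solo-safe w.r.t. `ψ`. -/
def Algo.decider (A : Algo) (ψ : PhasePred) : Prop :=
  ∀ i, 1 ≤ i → i ≤ A.r → A.soloSafe ψ i

/-- `ψ` is a unifier. -/
def Algo.unifier (A : Algo) (ψ : PhasePred) : Prop :=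
  A.thrM 1 ≤ (ψ 1).thrVal ∧
  (A.thrU 1 ≤ (ψ 1).thrVal ∨ A.borderThr ≤ (ψ 1).thrVal) ∧
  ∃ i, 1 ≤ i ∧ i ≤ A.ir ∧ (ψ i).isEqualizer ∧
    (∀ j, 2 ≤ j → j ≤ i → ¬ A.preserving ψ j) ∧
    (∀ j, i < j → j ≤ A.ir → A.soloSafe ψ j)

/-- The algorithm is syntactically safe. -/
def Algo.syntSafe (A : Algo) : Prop :=
  A.hasMult 1 ∧
  (∀ i, 1 ≤ i → i ≤ A.r → A.hasUni i) ∧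
  (∀ q ∈ (A.rounds 1).mults, q.2 = Op.smor) ∧
  1 - A.thrU (A.ir + 1) ≤ A.thrM 1 / 2 ∧
  1 - A.thrU (A.ir + 1) ≤ A.thrU 1

/-- Assumption (A) relative to the global predicate `gl`. -/
def Algo.assumptionA (A : Algo) (gl : PhasePred) : Prop :=
  ∀ i, 1 ≤ i → i ≤ A.r →
    (∀ j, 1 ≤ j → j < i → ¬ A.preserving gl j) →
    (A.hasUni i → (gl i).thrVal ≤ A.thrU i) ∧
    (A.hasMult i → (gl i).thrVal ≤ A.thrM i)

/-- Proviso (P): the global predicate has no equalizer and round `ir+1` has no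
mult instruction. -/
def Algo.provisoP (A : Algo) (gl : PhasePred) : Prop :=
  (∀ i, 1 ≤ i → i ≤ A.r → ¬ (gl i).isEqualizer) ∧ ¬ A.hasMult (A.ir + 1)

/-- Removing all mult instructions of a round. -/
def Round.dropMults (R : Round) : Round :=
  { uniThr := R.uniThr, mults := [], wfU := R.wfU,
    wfM := by simp, sorted := by first | exact List.chain'_nil | exact List.IsChain.nil | constructor | trivial }

/-- Removing all mult instructions of round `i` of an algorithm. -/
def Algo.dropMultsAt (A : Algo) (i : ℕ) : Algo :=
  { A with rounds := fun j => if j = i then (A.rounds j).dropMults else A.rounds j }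

/-! ### Communication predicates, executions, consensus -/

/-- A communication predicate `(G ψ̄) ∧ F(ψ^1 ∧ F(ψ^2 ∧ … ∧ F ψ^k))`:
a global phase predicate and sporadic phase predicates `ψ^1,…,ψ^k`. -/
structure CommPred where
  glob : PhasePred
  k : ℕ
  spor : ℕ → PhasePred

/-- Roundwise implication between phase predicates of an algorithm. -/
def predImplies (A : Algo) (ψ ψ' : PhasePred) : Prop :=
  ∀ i, 1 ≤ i → i ≤ A.r → (ψ i).implies (ψ' i)

/-- An execution of an algorithm respecting a communication predicate: an infinite
sequence of phase transitions under the global predicate, together with an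
increasing sequence of times at which the sporadic predicates hold. -/
structure Exec (A : Algo) (C : CommPred) (n : ℕ) where
  inp : ℕ → Fin n → Val
  dec : ℕ → Fin n → Val
  inp0 : ∀ p, inp 0 p ≠ none
  dec0 : ∀ p, dec 0 p = none
  step : ∀ s, phaseTrans A C.glob (inp s) (dec s) (inp (s + 1)) (dec (s + 1))
  sporTime : ℕ → ℕ
  mono : StrictMono sporTime
  sporStep : ∀ i, 1 ≤ i → i ≤ C.k →
    phaseTrans A (C.spor i) (inp (sporTime i)) (dec (sporTime i))
      (inp (sporTime i + 1)) (dec (sporTime i + 1))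

/-- Agreement: in every reachable state, any two non-`?` decision values coincide. -/
def Agreement (A : Algo) (C : CommPred) : Prop :=
  ∀ n, 0 < n → ∀ E : Exec A C n, ∀ s p q v w,
    E.dec s p = some v → E.dec s q = some w → v = w

/-- Termination: every execution reaches a state where all processes have decided. -/
def Termination (A : Algo) (C : CommPred) : Prop :=
  ∀ n, 0 < n → ∀ E : Exec A C n, ∃ s, ∀ p, E.dec s p ≠ none

/-- Solving consensus: agreement and termination. -/
def SolvesConsensus (A : Algo) (C : CommPred) : Prop :=
  Agreement A C ∧ Termination A C

theorem firstMult_eq_none_of_card_toFinset_le_one {n : ℕ} {S : Multiset ℕ}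
    (hS : S.toFinset.card ≤ 1) (L : List (ℝ × Op)) : firstMult n S L = none := by
  induction L with
  | nil => rfl
  | cons q L ih =>
    obtain ⟨t, op⟩ := q
    rw [firstMult, if_neg (fun h => by omega), ih]

theorem Round.update_eq_none_of_filterMap_eq_zero (R : Round) (n : ℕ) {H : Multiset Val}
    (hH : H.filterMap id = 0) : R.update n H = none := by
  rw [Round.update, hH, if_neg (by simp),
    firstMult_eq_none_of_card_toFinset_le_one (by simp)]

theorem Round.update_eq_none_of_mults_eq_nil {R : Round} (hR : R.mults = []) (n : ℕ)
    {H : Multiset Val} (hH : (H.filterMap id).toFinset.card ≠ 1) : R.update n H = none := by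
  rw [Round.update, hR, if_neg (fun ⟨_, _, h, _⟩ => hH h)]
  rfl

theorem RoundPred.sat_const {α : Type} (φ : RoundPred) {n : ℕ} (hn : 0 < n)
    {H : Multiset α} (hH : n ≤ Multiset.card H) : φ.sat n (fun _ => H) := by
  refine ⟨fun _ _ _ => rfl, fun t ht _ => ?_⟩
  have hn' : (0 : ℝ) < n := by exact_mod_cast hn
  calc t * n < 1 * n := by gcongr; exact (φ.wf t ht).2
    _ ≤ Multiset.card H := by simpa using hH

theorem card_msetOf {n : ℕ} (f : Fin n → Val) : Multiset.card (msetOf f) = n := by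
  simp [msetOf]

theorem mem_filterMap_msetOf {n : ℕ} {f : Fin n → Val} {v : ℕ} :
    v ∈ (msetOf f).filterMap id ↔ ∃ p, f p = some v := by
  simp [msetOf]

theorem roundTrans_of_eq_update_msetOf (R : Round) (φ : RoundPred) {n : ℕ} (hn : 0 < n)
    {f f' : Fin n → Val} (h : ∀ p, f' p = R.update n (msetOf f)) : roundTrans R φ f f' :=
  ⟨fun _ => msetOf f, fun _ => le_rfl, φ.sat_const hn (card_msetOf f).ge, h⟩

theorem isSpread.two_mul_card {n : ℕ} {f : Fin n → Val} (hf : isSpread f) :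
    2 * (Finset.univ.filter fun p => f p = some bVal).card = n := by
  have : (2 * (Finset.univ.filter fun p => f p = some bVal).card : ℝ) = n := by
    rw [hf.2]; ring
  exact_mod_cast this

theorem isSpread.exists_eq_bVal {n : ℕ} (hn : 0 < n) {f : Fin n → Val} (hf : isSpread f) :
    ∃ p, f p = some bVal := by
  have hpos : 0 < (Finset.univ.filter fun p => f p = some bVal).card := by
    have := hf.two_mul_card; omega
  obtain ⟨p, hp⟩ := Finset.card_pos.mp hpos
  exact ⟨p, (Finset.mem_filter.mp hp).2⟩

theorem isSpread.exists_eq_aVal {n : ℕ} (hn : 0 < n) {f : Fin n → Val} (hf : isSpread f) :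
    ∃ p, f p = some aVal := by
  have hlt : (Finset.univ.filter fun p => f p = some bVal).card < Fintype.card (Fin n) := by
    have := hf.two_mul_card; rw [Fintype.card_fin]; omega
  obtain ⟨p, -, hp⟩ := Finset.exists_mem_notMem_of_card_lt_card hlt
  exact ⟨p, (hf.1 p).resolve_right fun hb => hp (Finset.mem_filter.mpr ⟨Finset.mem_univ p, hb⟩)⟩

theorem isSpread.one_lt_card_values {n : ℕ} (hn : 0 < n) {f : Fin n → Val} (hf : isSpread f) :
    1 < ((msetOf f).filterMap id).toFinset.card := by
  obtain ⟨p, hp⟩ := hf.exists_eq_aVal hn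
  obtain ⟨q, hq⟩ := hf.exists_eq_bVal hn
  refine Finset.one_lt_card.mpr ⟨aVal, ?_, bVal, ?_, by simp [aVal, bVal]⟩ <;>
    rw [Multiset.mem_toFinset, mem_filterMap_msetOf]
  exacts [⟨p, hp⟩, ⟨q, hq⟩]

theorem roundTrans_spread_soloQ {R : Round} (hR : R.mults = []) (φ : RoundPred) {n : ℕ}
    (hn : 0 < n) {f : Fin n → Val} (hf : isSpread f) : roundTrans R φ f (soloQ n) :=
  roundTrans_of_eq_update_msetOf R φ hn fun _ =>
    (R.update_eq_none_of_mults_eq_nil hR n (hf.one_lt_card_values hn).ne').symm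

theorem filterMap_msetOf_soloQ (n : ℕ) : (msetOf (soloQ n)).filterMap id = 0 :=
  Multiset.eq_zero_of_forall_notMem fun _ hv => by
    obtain ⟨p, hp⟩ := mem_filterMap_msetOf.mp hv
    simp [soloQ] at hp

theorem roundTrans_soloQ_soloQ (R : Round) (φ : RoundPred) {n : ℕ} (hn : 0 < n) :
    roundTrans R φ (soloQ n) (soloQ n) :=
  roundTrans_of_eq_update_msetOf R φ hn fun _ =>
    (R.update_eq_none_of_filterMap_eq_zero n (filterMap_msetOf_soloQ n)).symm

theorem phaseTrans_spread_self {A : Algo} (hnm : ¬ A.hasMult 1) (ψ : PhasePred) {n : ℕ}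
    (hn : 0 < n) {f : Fin n → Val} (hf : isSpread f) :
    phaseTrans A ψ f (soloQ n) f (soloQ n) := by
  have hR1 : (A.rounds 1).mults = [] := not_not.mp hnm
  have hir := A.one_le_ir
  have hr := A.two_le_r
  refine ⟨fun i => if i = 0 then f else soloQ n, if_pos rfl, fun i hi _ => ?_,
    fun p => by simp [soloQ, show A.ir ≠ 0 by omega],
    fun p => by simp [soloQ, show A.r ≠ 0 by omega]⟩
  obtain rfl | hi := hi.eq_or_lt
  · simpa using roundTrans_spread_soloQ hR1 (ψ 1) hn hf
  · simpa [show i ≠ 0 by omega, show i - 1 ≠ 0 by omega] using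
      roundTrans_soloQ_soloQ (A.rounds i) (ψ i) hn

theorem isSpread_pair : isSpread ![some aVal, some bVal] := by
  refine ⟨fun p => by fin_cases p <;> simp, ?_⟩
  rw [show (Finset.univ.filter fun p => ![some aVal, some bVal] p = some bVal) = {1} by decide]
  norm_num

theorem not_termination_of_phaseTrans_self {A : Algo} {n : ℕ} (hn : 0 < n) {f : Fin n → Val}
    (hf : ∀ p, f p ≠ none) (h : ∀ ψ, phaseTrans A ψ f (soloQ n) f (soloQ n)) (C : CommPred) :
    ¬ Termination A C := fun hT => by
  obtain ⟨s, hs⟩ := hT n hn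
    { inp := fun _ => f, dec := fun _ => soloQ n, inp0 := hf, dec0 := fun _ => rfl,
      step := fun _ => h C.glob, sporTime := id, mono := strictMono_id,
      sporStep := fun i _ _ => h (C.spor i) }
  exact hs ⟨0, hn⟩ rfl

/-- Lemma 2.  If the first round has no mult instruction then for
every phase predicate there is a phase transition `spread →ψ spread`;
consequently, for every communication predicate the algorithm may not terminate. -/
theorem no_mult_first_round_no_termination (A : Algo) (hnm : ¬ A.hasMult 1) :
    (∀ ψ : PhasePred, ∀ n : ℕ, 0 < n → ∀ f : Fin n → Val, isSpread f →
        phaseTrans A ψ f (soloQ n) f (soloQ n)) ∧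
    (∀ C : CommPred, ¬ Termination A C) := by
  have spread_self : ∀ ψ : PhasePred, ∀ n : ℕ, 0 < n → ∀ f : Fin n → Val, isSpread f →
      phaseTrans A ψ f (soloQ n) f (soloQ n) :=
    fun ψ _ hn _ hf => phaseTrans_spread_self hnm ψ hn hf
  refine ⟨spread_self, not_termination_of_phaseTrans_self two_pos (fun p => ?_)
    fun ψ => spread_self ψ 2 two_pos _ isSpread_pair⟩
  fin_cases p <;> simp

end HO
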